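/- Let G be a finite abelian group, H a subgroup of G, and E ⊆ H. Then E is a spectral set in G if and only if E is a spectral set in H. -/

import Mathlib

/-- `Λ`, a finite set of (additive) characters of `G`, is a spectrum of `E ⊆ G`:
the characters restricted to `E` are pairwise orthogonal and there are `|E|` of them
(hence they form an orthogonal basis of the functions on `E`). -/
def IsSpectrumChar {G : Type*} [AddCommGroup G] (E : Finset G)
    (L : Finset (AddChar G ℂ)) : Prop :=
  L.card = E.card ∧
  ∀ χ ∈ L, ∀ ψ ∈ L, χ ≠ ψ → ∑ x ∈ E, χ x * (starRingEnd ℂ) (ψ x) = 0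


/-! Restriction to `H` maps characters of `G` to characters of `H` without changing their values
on `E ⊆ H`, hence without changing the orthogonality relations on `E`. It is surjective: `ℂˣ` is
divisible, hence an injective `ℤ`-module, so every character of `H` extends to `G`. And it is
injective on any spectrum of `E`, because two characters agreeing on a nonempty `E` have inner
product `∑ |χ x|² ≠ 0` there. So spectra can be pushed along restriction and pulled back along a
section of it. -/

open Finset Function

lemma Complex.units_zpow_surjective {n : ℤ} (hn : n ≠ 0) :
    Surjective fun z : ℂˣ => z ^ n := fun a =>
  ⟨Units.mk0 (exp (log a / n)) (exp_ne_zero _), Units.ext <| by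
    rw [Units.val_zpow_eq_zpow_val, Units.val_mk0, ← exp_int_mul,
      mul_div_cancel₀ _ (Int.cast_ne_zero.2 hn), exp_log a.ne_zero]⟩

noncomputable instance Additive.complexUnits_divisibleBy : DivisibleBy (Additive ℂˣ) ℤ :=
  divisibleByOfSMulRightSurj _ _ fun hn => Complex.units_zpow_surjective hn

section

variable {G H : Type*} [AddCommGroup G] [AddCommGroup H] {φ : H →+ G}

lemma AddChar.compAddMonoidHom_surjective (hφ : Injective φ) :
    Surjective fun χ : AddChar G ℂ => χ.compAddMonoidHom φ := by
  intro ψ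
  let ψu : H →+ Additive ℂˣ := MonoidHom.toAdditiveRight ψ.toMonoidHom.toHomUnits
  obtain ⟨χu, hχu⟩ := (Module.Baer.of_divisible _).extension_property_addMonoidHom φ hφ ψu
  refine ⟨⟨fun x => ((χu x).toMul : ℂ), by simp, fun x y => by simp⟩, ?_⟩
  ext x
  simpa [ψu] using congr(((($hχu x).toMul : ℂˣ) : ℂ))

lemma IsSpectrumChar.exists_apply_ne {E : Finset G} {L : Finset (AddChar G ℂ)}
    (hL : IsSpectrumChar E L) {χ ψ : AddChar G ℂ} (hχ : χ ∈ L) (hψ : ψ ∈ L) (hne : χ ≠ ψ) :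
    ∃ x ∈ E, χ x ≠ ψ x := by
  obtain ⟨x₀, hx₀⟩ : E.Nonempty := by rw [← card_pos, ← hL.1]; exact card_pos.2 ⟨χ, hχ⟩
  by_contra! h
  have hsum : ∑ x ∈ E, Complex.normSq (ψ x) = 0 := by
    have := hL.2 χ hχ ψ hψ hne
    rw [sum_congr rfl fun x hx => by rw [h x hx, Complex.mul_conj]] at this
    exact_mod_cast this
  rw [sum_eq_zero_iff_of_nonneg fun _ _ => Complex.normSq_nonneg _] at hsum
  exact (ψ.val_isUnit x₀).ne_zero (Complex.normSq_eq_zero.1 (hsum x₀ hx₀))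

variable (hφ : Injective φ) {E : Finset H}

lemma IsSpectrumChar.injOn_compAddMonoidHom {L : Finset (AddChar G ℂ)}
    (hL : IsSpectrumChar (E.map ⟨φ, hφ⟩) L) :
    Set.InjOn (fun χ : AddChar G ℂ => χ.compAddMonoidHom φ) L := by
  intro χ hχ ψ hψ hres
  by_contra hne
  obtain ⟨_, hx, hne'⟩ := hL.exists_apply_ne hχ hψ hne
  obtain ⟨y, -, rfl⟩ := mem_map.1 hx
  exact hne' congr($hres y)

lemma isSpectrumChar_map_iff {L : Finset (AddChar G ℂ)}
    (hL : Set.InjOn (fun χ : AddChar G ℂ => χ.compAddMonoidHom φ) L) :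
    IsSpectrumChar (E.map ⟨φ, hφ⟩) L ↔
      IsSpectrumChar E (L.image fun χ => χ.compAddMonoidHom φ) := by
  simp only [IsSpectrumChar, card_map, card_image_of_injOn hL, forall_mem_image, sum_map]
  refine and_congr_right' <| forall₂_congr fun χ hχ => forall₂_congr fun ψ hψ => ?_
  rw [hL.ne_iff hχ hψ]
  rfl

lemma exists_isSpectrumChar_map_iff :
    (∃ L, IsSpectrumChar (E.map ⟨φ, hφ⟩) L) ↔ ∃ L, IsSpectrumChar E L := by
  constructor
  · rintro ⟨L, hL⟩
    exact ⟨_, (isSpectrumChar_map_iff hφ (hL.injOn_compAddMonoidHom hφ)).1 hL⟩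
  · rintro ⟨L, hL⟩
    obtain ⟨s, hs⟩ := (AddChar.compAddMonoidHom_surjective hφ).hasRightInverse
    have hinj : Set.InjOn (fun χ : AddChar G ℂ => χ.compAddMonoidHom φ) ↑(L.image s) := by
      rw [coe_image]
      rintro _ ⟨χ, -, rfl⟩ _ ⟨ψ, -, rfl⟩ h
      exact congrArg s ((hs χ).symm.trans (h.trans (hs ψ)))
    refine ⟨L.image s, (isSpectrumChar_map_iff hφ hinj).2 ?_⟩
    rwa [image_image, hs.id, image_id]

end

theorem spectral_group_iff_spectral_subgroup {G : Type*} [AddCommGroup G]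
    (H : AddSubgroup G) [DecidablePred (· ∈ H)]
    (E : Finset G) (hE : ∀ e ∈ E, e ∈ H) :
    (∃ L : Finset (AddChar G ℂ), IsSpectrumChar E L) ↔
      (∃ L : Finset (AddChar H ℂ),
        IsSpectrumChar (E.subtype (· ∈ H)) L) := by
  have hmap : (E.subtype (· ∈ H)).map ⟨H.subtype, H.subtype_injective⟩ = E :=
    subtype_map_of_mem hE
  rw [← exists_isSpectrumChar_map_iff H.subtype_injective, hmap]
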